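/- For every positive integer y, the sum over j ≥ 0 of K_{y+1,j} := f(y)f(y+1)/(f(y+j)f(y+j+1)) equals (y+4)(2y+5)/(10(y+2)), where f(x) = x(x+3)(2x+3). Consequently, for the chain X̃ started at y+1, the probability of never hitting y is 10(y+2)/((y+4)(2y+5)). -/

import Mathlib

/-!
The summand telescopes: `1 / (f z f (z + 1)) = tail z - tail (z + 1)` with
`tail z = 1 / (10 z (z + 1) (z + 2) (z + 3) (2 z + 3))`, so the series sums to
`f y f (y + 1) tail y = S y`.

For the chain, `q x / p x = f (x - 1) / f (x + 1)`, so `K (j + 1) / K j = q / p` at `y + j + 1`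
and the partial sums `W j = ∑_{i<j} K i` are harmonic on `{y, y + 1, …}`. Every harmonic `h` is
then `h 0 - (h 0 - h 1) W`. The hitting probabilities `H y n` increase in `n` to a harmonic limit
`L` with `L 0 = 1`, and `L ≥ 0` forces `(1 - L 1) S ≤ 1`. Conversely, by induction on `n`, `H y n`
lies below every nonnegative harmonic function equal to `1` at `y`, in particular below
`1 - W / S`, which gives `1 - L 1 ≥ 1 / S`.
-/

open Filter Topology

noncomputable def p (x : ℕ) : ℝ :=
  ((x : ℝ) + 4) * (2 * x + 5) / (3 * ((x : ℝ) + 2) * (2 * x + 3))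

noncomputable def r (x : ℕ) : ℝ :=
  (x : ℝ) * ((x : ℝ) + 3) / (3 * ((x : ℝ) + 1) * ((x : ℝ) + 2))

noncomputable def q (x : ℕ) : ℝ :=
  ((x : ℝ) - 1) * (2 * x + 1) / (3 * ((x : ℝ) + 1) * (2 * x + 3))

noncomputable def f (x : ℝ) : ℝ := x * (x + 3) * (2 * x + 3)

/-- `H k n x` is the probability that the chain `X̃` started at `x` hits `k`
within `n` steps. -/
noncomputable def H (k : ℕ) : ℕ → ℕ → ℝ
  | 0, x => if x = k then 1 else 0
  | n + 1, x =>
    if x = k then 1 else p x * H k n (x + 1) + r x * H k n x + q x * H k n (x - 1)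

open Finset

namespace EscapeProbability

lemma f_pos {x : ℝ} (hx : 0 < x) : 0 < f x := by
  unfold f; positivity

noncomputable def tail (z : ℝ) : ℝ := (10 * z * (z + 1) * (z + 2) * (z + 3) * (2 * z + 3))⁻¹

lemma tail_pos {z : ℝ} (hz : 0 < z) : 0 < tail z := by
  unfold tail; positivity

lemma one_div_f_mul_f_add_one {z : ℝ} (hz : 0 < z) :
    1 / (f z * f (z + 1)) = tail z - tail (z + 1) := by
  unfold f tail
  field_simp
  ring

lemma tendsto_tail_atTop : Tendsto tail atTop (𝓝 0) := by
  refine Tendsto.inv_tendsto_atTop (tendsto_atTop_mono' _ ?_ tendsto_id)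
  filter_upwards [eventually_ge_atTop 1] with z hz
  have h : (1 : ℝ) ≤ 10 * (z + 1) * (z + 2) * (z + 3) * (2 * z + 3) := by
    calc (1 : ℝ) = 1 * 1 * 1 * 1 * 1 := by norm_num
      _ ≤ 10 * (z + 1) * (z + 2) * (z + 3) * (2 * z + 3) := by gcongr <;> linarith
  calc id z = z * 1 := by simp
    _ ≤ z * (10 * (z + 1) * (z + 2) * (z + 3) * (2 * z + 3)) := by gcongr
    _ = _ := by ring

variable {y : ℕ}

noncomputable def K (y j : ℕ) : ℝ := f y * f (y + 1) / (f ((y : ℝ) + j) * f ((y : ℝ) + j + 1))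

noncomputable def S (y : ℕ) : ℝ := ((y : ℝ) + 4) * (2 * y + 5) / (10 * ((y : ℝ) + 2))

noncomputable def W (y m : ℕ) : ℝ := ∑ j ∈ range m, K y j

lemma K_nonneg (hy : 0 < y) (j : ℕ) : 0 ≤ K y j := by
  have := f_pos (x := y) (by positivity)
  have := f_pos (x := y + 1) (by positivity)
  have := f_pos (x := y + j) (by positivity)
  have := f_pos (x := y + j + 1) (by positivity)
  unfold K; positivity

lemma K_zero (hy : 0 < y) : K y 0 = 1 := by
  have := f_pos (x := y) (by positivity)
  have := f_pos (x := y + 1) (by positivity)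
  simp only [K, Nat.cast_zero, add_zero]
  field_simp

lemma K_eq_mul_tail_sub (hy : 0 < y) (j : ℕ) :
    K y j = f y * f (y + 1) * (tail (y + j) - tail (y + j + 1)) := by
  rw [K, div_eq_mul_one_div, one_div_f_mul_f_add_one (by positivity)]

lemma f_mul_f_add_one_mul_tail (hy : 0 < y) : f y * f (y + 1) * tail y = S y := by
  have : (0 : ℝ) < y := by positivity
  unfold f tail S
  field_simp
  ring

lemma W_eq (hy : 0 < y) (m : ℕ) : W y m = S y - f y * f (y + 1) * tail (y + m) := by
  have h := sum_range_sub' (fun j : ℕ => tail (y + j)) m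
  simp only [Nat.cast_add, Nat.cast_one, Nat.cast_zero, add_zero, ← add_assoc] at h
  rw [W, sum_congr rfl fun j _ => K_eq_mul_tail_sub hy j, ← mul_sum, h,
    ← f_mul_f_add_one_mul_tail hy]
  ring

lemma W_succ (m : ℕ) : W y (m + 1) = W y m + K y m :=
  sum_range_succ _ _

lemma W_one (hy : 0 < y) : W y 1 = 1 := by
  rw [W, sum_range_one, K_zero hy]

lemma W_nonneg (hy : 0 < y) (m : ℕ) : 0 ≤ W y m :=
  sum_nonneg fun j _ => K_nonneg hy j

lemma W_le_S (hy : 0 < y) (m : ℕ) : W y m ≤ S y := by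
  have : 0 < f y * f (y + 1) * tail (y + m) :=
    mul_pos (mul_pos (f_pos (by positivity)) (f_pos (by positivity))) (tail_pos (by positivity))
  linarith [W_eq hy m]

lemma S_pos (y : ℕ) : 0 < S y := by
  unfold S; positivity

lemma tendsto_W (hy : 0 < y) : Tendsto (W y) atTop (𝓝 (S y)) := by
  have h : Tendsto (fun m : ℕ => tail (y + m)) atTop (𝓝 0) :=
    tendsto_tail_atTop.comp (tendsto_atTop_add_const_left _ _ tendsto_natCast_atTop_atTop)
  simpa using ((h.const_mul (f y * f (y + 1))).const_sub (S y)).congr fun m => (W_eq hy m).symm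

lemma hasSum_K (hy : 0 < y) : HasSum (K y) (S y) :=
  (hasSum_iff_tendsto_nat_of_nonneg (K_nonneg hy) _).mpr (tendsto_W hy)

lemma p_add_r_add_q (x : ℕ) : p x + r x + q x = 1 := by
  unfold p r q
  field_simp
  ring

lemma p_pos (x : ℕ) : 0 < p x := by
  unfold p; positivity

lemma r_nonneg (x : ℕ) : 0 ≤ r x := by
  unfold r; positivity

lemma q_succ_nonneg (x : ℕ) : 0 ≤ q (x + 1) := by
  simp only [q, Nat.cast_add, Nat.cast_one, add_sub_cancel_right]
  positivity

/-- `q x / p x = f (x - 1) / f (x + 1)`, the factor of the product defining `K`. -/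
lemma p_mul_K_succ (hy : 0 < y) (j : ℕ) :
    p (y + j + 1) * K y (j + 1) = q (y + j + 1) * K y j := by
  have hu : (0 : ℝ) < y + j := by positivity
  unfold p q K f
  push_cast
  field_simp
  ring

/-- The mean of `h` after one step of the chain from `y + j + 1`, for `h` indexed by the
distance to `y`. -/
noncomputable def step (y : ℕ) (h : ℕ → ℝ) (j : ℕ) : ℝ :=
  p (y + j + 1) * h (j + 2) + r (y + j + 1) * h (j + 1) + q (y + j + 1) * h j

def IsHarmonic (y : ℕ) (h : ℕ → ℝ) : Prop := ∀ j, step y h j = h (j + 1)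

lemma step_mono {h g : ℕ → ℝ} (hg : ∀ i, h i ≤ g i) (j : ℕ) : step y h j ≤ step y g j := by
  have := p_pos (y + j + 1)
  have := r_nonneg (y + j + 1)
  have := q_succ_nonneg (y + j)
  unfold step
  gcongr <;> exact hg _

lemma step_const_add_mul (h : ℕ → ℝ) (a b : ℝ) (j : ℕ) :
    step y (fun i => a + b * h i) j = a + b * step y h j := by
  unfold step
  linear_combination a * p_add_r_add_q (y + j + 1)

lemma IsHarmonic.const_add_mul {h : ℕ → ℝ} (hh : IsHarmonic y h) (a b : ℝ) :
    IsHarmonic y (fun i => a + b * h i) := fun j => by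
  rw [step_const_add_mul, hh j]

lemma isHarmonic_W (hy : 0 < y) : IsHarmonic y (W y) := fun j => by
  simp only [step, W_succ]
  linear_combination p_mul_K_succ hy j + (W y j + K y j) * p_add_r_add_q (y + j + 1)

lemma IsHarmonic.sub_succ_eq {h : ℕ → ℝ} (hy : 0 < y) (hh : IsHarmonic y h) (j : ℕ) :
    h j - h (j + 1) = (h 0 - h 1) * K y j := by
  induction j with
  | zero => rw [K_zero hy, mul_one]
  | succ j ih =>
    have hstep := hh j
    unfold step at hstep
    refine mul_left_cancel₀ (p_pos (y + j + 1)).ne' ?_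
    linear_combination (h (j + 1)) * p_add_r_add_q (y + j + 1) - hstep
      + q (y + j + 1) * ih - (h 0 - h 1) * p_mul_K_succ hy j

lemma IsHarmonic.eq_sub_mul_W {h : ℕ → ℝ} (hy : 0 < y) (hh : IsHarmonic y h) (m : ℕ) :
    h m = h 0 - (h 0 - h 1) * W y m := by
  induction m with
  | zero => simp [W]
  | succ m ih =>
    rw [W_succ]
    linear_combination ih - hh.sub_succ_eq hy m

lemma H_self (n : ℕ) : H y n y = 1 := by
  cases n <;> simp [H]

lemma H_zero_add_succ (j : ℕ) : H y 0 (y + (j + 1)) = 0 := by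
  simp [H]

lemma H_succ_add_succ (n j : ℕ) :
    H y (n + 1) (y + (j + 1)) = step y (fun i => H y n (y + i)) j := by
  simp only [H, step]
  rw [if_neg (by omega)]
  congr 3

lemma H_nonneg (n j : ℕ) : 0 ≤ H y n (y + j) := by
  induction n generalizing j with
  | zero => rcases j with _ | j <;> simp [H_self, H_zero_add_succ]
  | succ n ih =>
    rcases j with _ | j
    · simp [H_self]
    · simpa [H_succ_add_succ, step] using step_mono (y := y) (h := fun _ => 0) ih j

lemma H_le_of_isHarmonic {h : ℕ → ℝ} (hh : IsHarmonic y h) (h0 : h 0 = 1)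
    (h_nonneg : ∀ j, 0 ≤ h j) (n j : ℕ) : H y n (y + j) ≤ h j := by
  induction n generalizing j with
  | zero => rcases j with _ | j <;> simp [H_self, H_zero_add_succ, h0, h_nonneg]
  | succ n ih =>
    rcases j with _ | j
    · simp [H_self, h0]
    · rw [H_succ_add_succ, ← hh j]
      exact step_mono ih j

lemma H_le_one_sub_W_div_S (hy : 0 < y) (n j : ℕ) : H y n (y + j) ≤ 1 - W y j / S y := by
  refine H_le_of_isHarmonic (h := fun j => 1 - W y j / S y) ?_ (by simp [W]) (fun j => ?_) n j
  · simpa [div_eq_mul_inv, mul_comm, sub_eq_add_neg] using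
      (isHarmonic_W hy).const_add_mul 1 (-(S y)⁻¹)
  · rw [sub_nonneg, div_le_one (S_pos y)]
    exact W_le_S hy j

lemma H_le_one (hy : 0 < y) (n j : ℕ) : H y n (y + j) ≤ 1 := by
  have := div_nonneg (W_nonneg hy j) (S_pos y).le
  linarith [H_le_one_sub_W_div_S hy n j]

lemma H_le_H_succ (n j : ℕ) : H y n (y + j) ≤ H y (n + 1) (y + j) := by
  induction n generalizing j with
  | zero => rcases j with _ | j <;> simp [H_self, H_zero_add_succ, H_nonneg]
  | succ n ih =>
    rcases j with _ | j
    · simp [H_self]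
    · rw [H_succ_add_succ, H_succ_add_succ]
      exact step_mono ih j

noncomputable def L (y j : ℕ) : ℝ := ⨆ n, H y n (y + j)

lemma tendsto_H (hy : 0 < y) (j : ℕ) : Tendsto (fun n => H y n (y + j)) atTop (𝓝 (L y j)) :=
  tendsto_atTop_ciSup (monotone_nat_of_le_succ fun n => H_le_H_succ n j)
    ⟨1, Set.forall_mem_range.mpr fun n => H_le_one hy n j⟩

lemma L_zero : L y 0 = 1 := by
  simp [L, H_self]

lemma L_nonneg (hy : 0 < y) (j : ℕ) : 0 ≤ L y j :=
  ge_of_tendsto' (tendsto_H hy j) fun n => H_nonneg n j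

lemma isHarmonic_L (hy : 0 < y) : IsHarmonic y (L y) := fun j => by
  have hlim : Tendsto (fun n => step y (fun i => H y n (y + i)) j) atTop (𝓝 (step y (L y) j)) :=
    (((tendsto_H hy (j + 2)).const_mul _).add ((tendsto_H hy (j + 1)).const_mul _)).add
      ((tendsto_H hy j).const_mul _)
  refine tendsto_nhds_unique hlim ?_
  exact ((tendsto_H hy (j + 1)).comp (tendsto_add_atTop_nat 1)).congr fun n => H_succ_add_succ n j

lemma one_sub_L_one (hy : 0 < y) : 1 - L y 1 = (S y)⁻¹ := by
  have hL := (isHarmonic_L hy).eq_sub_mul_W hy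
  rw [L_zero] at hL
  refine le_antisymm ?_ ?_
  · rw [← one_div, le_div_iff₀ (S_pos y)]
    exact le_of_tendsto' ((tendsto_W hy).const_mul _) fun m => by linarith [hL m, L_nonneg hy m]
  · have h1 : L y 1 ≤ 1 - W y 1 / S y :=
      ciSup_le fun n => H_le_one_sub_W_div_S hy n 1
    rw [W_one hy] at h1
    linarith [one_div (S y)]

end EscapeProbability

open EscapeProbability in
/-- For a positive integer `y`, `∑_{j≥0} K_{y+1,j} = (y+4)(2y+5)/(10(y+2))`, and
consequently the chain `X̃` started at `y+1` never hits `y` with probability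
`10(y+2)/((y+4)(2y+5))`. -/
theorem stmt_4 (y : ℕ) (hy : 0 < y) :
    (∑' j : ℕ, f y * f (y + 1) / (f ((y : ℝ) + j) * f ((y : ℝ) + j + 1))
        = ((y : ℝ) + 4) * (2 * y + 5) / (10 * ((y : ℝ) + 2))) ∧
    Tendsto (fun n => 1 - H y n (y + 1)) atTop
      (𝓝 (10 * ((y : ℝ) + 2) / (((y : ℝ) + 4) * (2 * y + 5)))) := by
  refine ⟨(hasSum_K hy).tsum_eq, ?_⟩
  have h := (tendsto_H hy 1).const_sub 1
  rwa [one_sub_L_one hy, S, inv_div] at h
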